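/- arXiv:2406.04588 — 4 statements merged into one kernel-verified Lean document; each statement's English description precedes it below -/
import Mathlib

section
/- Let θ : ℝ → ℝ∪{∞} be a proper lower semicontinuous function with θ(0)=0, θ(t)>0 for t>0, θ(t)=∞ for t<0. Fix γ>0, λ>0 and u ∈ ℝⁿ, and let S* be the set of minimizers over x ∈ ℝⁿ of (1/2)‖γx − u‖² + λθ(‖x‖). Then S* = {0} if u = 0, and otherwise S* = { (u/‖u‖)·s : s ∈ argmin_{t∈ℝ} ( (1/2)(γt − ‖u‖)² + λθ(t) ) }, i.e. S* equals (u/‖u‖) times the proximal set P_{λ/γ²}θ(‖u‖/γ). -/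
/-!
By the reverse triangle inequality `‖γ • x - u‖ ≥ |γ‖x‖ - ‖u‖|`, the objective at `x` dominates
the scalar objective at `t = ‖x‖`, and in a strictly convex space equality holds only when `x` lies
on the ray through `u`, where the two objectives agree. Hence the minimizers of the vector problem
are the points `(t / ‖u‖) • u` for `t` a scalar minimizer; the value `θ = ⊤` on `(-∞, 0)` rules out
negative `t`. For `u = 0` the objective is positive away from `0` and vanishes at `0`.
-/

open Set

section
variable {E : Type*} [NormedAddCommGroup E] [NormedSpace ℝ E]

noncomputable def radialObjective (φ : ℝ → EReal) (γ : ℝ) (u x : E) : EReal :=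
  ((1/2 * ‖γ • x - u‖ ^ 2 : ℝ) : EReal) + φ ‖x‖

noncomputable def scalarObjective (φ : ℝ → EReal) (γ ν t : ℝ) : EReal :=
  ((1/2 * (γ * t - ν) ^ 2 : ℝ) : EReal) + φ t

variable {φ : ℝ → EReal} {γ ν : ℝ} {u x : E}

lemma sq_sub_norm_le_norm_smul_sub_sq (hγ : 0 ≤ γ) (x u : E) :
    (γ * ‖x‖ - ‖u‖) ^ 2 ≤ ‖γ • x - u‖ ^ 2 := by
  rw [← sq_abs, ← norm_smul_of_nonneg hγ]
  exact pow_le_pow_left₀ (abs_nonneg _) (abs_norm_sub_norm_le _ _) 2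

lemma scalarObjective_norm_le_radialObjective (hγ : 0 ≤ γ) (x : E) :
    scalarObjective φ γ ‖u‖ ‖x‖ ≤ radialObjective φ γ u x := by
  refine add_le_add_left (EReal.coe_le_coe_iff.2 ?_) _
  linarith [sq_sub_norm_le_norm_smul_sub_sq hγ x u]

lemma radialObjective_div_norm_smul (hu : u ≠ 0) {t : ℝ} (ht : 0 ≤ t) :
    radialObjective φ γ u ((t / ‖u‖) • u) = scalarObjective φ γ ‖u‖ t := by
  have hu' : ‖u‖ ≠ 0 := norm_ne_zero_iff.2 hu
  have hnorm : ‖(t / ‖u‖) • u‖ = t := by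
    rw [norm_smul, Real.norm_of_nonneg (div_nonneg ht (norm_nonneg u)), div_mul_cancel₀ t hu']
  have hsub : γ • (t / ‖u‖) • u - u = ((γ * t - ‖u‖) / ‖u‖) • u := by
    rw [smul_smul, sub_div, div_self hu', sub_smul, one_smul, mul_div_assoc]
  rw [radialObjective, scalarObjective, hnorm, hsub, norm_smul, Real.norm_eq_abs, abs_div,
    abs_norm, div_mul_cancel₀ _ hu', sq_abs]

lemma scalarObjective_of_neg (hφ : ∀ t < 0, φ t = ⊤) {t : ℝ} (ht : t < 0) :
    scalarObjective φ γ ν t = ⊤ := by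
  rw [scalarObjective, hφ t ht, EReal.add_top_of_ne_bot (EReal.coe_ne_bot _)]

lemma eq_div_norm_smul_of_sameRay (hu : u ≠ 0) (h : SameRay ℝ x u) : x = (‖x‖ / ‖u‖) • u := by
  rw [div_eq_inv_mul, mul_smul, h.norm_smul_eq, inv_smul_smul₀ (norm_ne_zero_iff.2 hu)]

lemma eq_div_norm_smul_of_radialObjective_le [StrictConvexSpace ℝ E] (hγ : 0 < γ) (hu : u ≠ 0)
    (hφx : φ ‖x‖ ≠ ⊤) (hφx' : φ ‖x‖ ≠ ⊥)
    (hle : radialObjective φ γ u x ≤ scalarObjective φ γ ‖u‖ ‖x‖) :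
    x = (‖x‖ / ‖u‖) • u := by
  rw [radialObjective, scalarObjective, ← EReal.coe_toReal hφx hφx', ← EReal.coe_add, ← EReal.coe_add,
    EReal.coe_le_coe_iff] at hle
  have hsq : ‖γ • x - u‖ ^ 2 ≤ |‖γ • x‖ - ‖u‖| ^ 2 := by
    rw [sq_abs, norm_smul_of_nonneg hγ.le]; linarith
  have hray : SameRay ℝ (γ • x) u := sameRay_iff_norm_sub.2 <|
    le_antisymm (pow_le_pow_iff_left₀ (norm_nonneg _) (abs_nonneg _) two_ne_zero |>.1 hsq)
      (abs_norm_sub_norm_le _ _)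
  refine eq_div_norm_smul_of_sameRay hu ?_
  simpa [inv_smul_smul₀ hγ.ne'] using hray.pos_smul_left (inv_pos.2 hγ)

lemma setOf_isMin_radialObjective_of_ne_zero [StrictConvexSpace ℝ E] (hγ : 0 < γ) (hu : u ≠ 0)
    (hφ : ∀ t, 0 ≤ φ t) (hφneg : ∀ t < 0, φ t = ⊤) (hφ0 : φ 0 ≠ ⊤) :
    {x | ∀ y, radialObjective φ γ u x ≤ radialObjective φ γ u y} =
      (fun s : ℝ => (s / ‖u‖) • u) ''
        {t | ∀ s, scalarObjective φ γ ‖u‖ t ≤ scalarObjective φ γ ‖u‖ s} := by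
  have hG0 : scalarObjective φ γ ‖u‖ 0 ≠ ⊤ :=
    EReal.add_ne_top (EReal.coe_ne_top _) hφ0
  have hRG : ∀ s, ∃ y, radialObjective φ γ u y ≤ scalarObjective φ γ ‖u‖ s := by
    intro s
    rcases lt_or_ge s 0 with hs | hs
    · exact ⟨0, (scalarObjective_of_neg hφneg hs).symm ▸ le_top⟩
    · exact ⟨_, (radialObjective_div_norm_smul hu hs).le⟩
  ext x
  constructor
  · intro hx
    have hxG : ∀ s, radialObjective φ γ u x ≤ scalarObjective φ γ ‖u‖ s := fun s =>
      (hRG s).elim fun y hy => (hx y).trans hy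
    have hφx : φ ‖x‖ ≠ ⊤ := by
      intro h
      have : radialObjective φ γ u x = ⊤ := by
        rw [radialObjective, h, EReal.add_top_of_ne_bot (EReal.coe_ne_bot _)]
      exact hG0 (top_le_iff.1 (this ▸ hxG 0))
    refine ⟨‖x‖, fun s => (scalarObjective_norm_le_radialObjective hγ.le x).trans (hxG s), ?_⟩
    exact (eq_div_norm_smul_of_radialObjective_le hγ hu hφx
      (EReal.bot_lt_zero.trans_le (hφ _)).ne' (hxG _)).symm
  · rintro ⟨t, ht, rfl⟩ y
    have ht0 : 0 ≤ t := by
      by_contra! hneg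
      exact hG0 (top_le_iff.1 (scalarObjective_of_neg hφneg hneg ▸ ht 0))
    rw [radialObjective_div_norm_smul hu ht0]
    exact (ht ‖y‖).trans (scalarObjective_norm_le_radialObjective hγ.le y)

lemma setOf_isMin_radialObjective_zero (hγ : γ ≠ 0) (hφ : ∀ t, 0 ≤ φ t) (hφ0 : φ 0 = 0) :
    {x : E | ∀ y, radialObjective φ γ (0 : E) x ≤ radialObjective φ γ (0 : E) y} = {0} := by
  have hR0 : radialObjective φ γ (0 : E) 0 = 0 := by simp [radialObjective, hφ0]
  have hR_nonneg : ∀ y : E, 0 ≤ radialObjective φ γ 0 y := fun y =>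
    add_nonneg (EReal.coe_nonneg.2 (by positivity)) (hφ _)
  refine eq_singleton_iff_unique_mem.2 ⟨fun y => hR0 ▸ hR_nonneg y, fun x hx => ?_⟩
  by_contra hx0
  have hpos : (0 : EReal) < radialObjective φ γ 0 x :=
    add_pos_of_pos_of_nonneg (EReal.coe_pos.2 (by simp [hγ, hx0])) (hφ _)
  exact (hx 0).not_gt (hR0 ▸ hpos)

end

theorem stmt_0_general {n : ℕ} (θ : ℝ → EReal)
    (hθ0 : θ 0 = 0) (hθpos : ∀ t : ℝ, 0 < t → 0 < θ t)
    (hθneg : ∀ t : ℝ, t < 0 → θ t = ⊤)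
    (γ lam : ℝ) (hγ : 0 < γ) (hlam : 0 < lam)
    (u : EuclideanSpace ℝ (Fin n))
    (S : Set (EuclideanSpace ℝ (Fin n)))
    (hS : S = {x | ∀ y : EuclideanSpace ℝ (Fin n),
      (((1/2) * ‖γ • x - u‖^2 : ℝ) : EReal) + (lam : EReal) * θ ‖x‖
        ≤ (((1/2) * ‖γ • y - u‖^2 : ℝ) : EReal) + (lam : EReal) * θ ‖y‖}) :
    (u = 0 → S = {0}) ∧
    (u ≠ 0 → S = (fun s : ℝ => (s / ‖u‖) • u) ''
      {t : ℝ | ∀ s : ℝ,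
        (((1/2) * (γ * t - ‖u‖)^2 : ℝ) : EReal) + (lam : EReal) * θ t
          ≤ (((1/2) * (γ * s - ‖u‖)^2 : ℝ) : EReal) + (lam : EReal) * θ s}) := by
  subst hS
  have hθ_nonneg (t : ℝ) : 0 ≤ θ t := by
    rcases lt_trichotomy t 0 with ht | rfl | ht
    · simp [hθneg t ht]
    · simp [hθ0]
    · exact (hθpos t ht).le
  have hφ (t : ℝ) : 0 ≤ (lam : EReal) * θ t :=
    mul_nonneg (EReal.coe_nonneg.2 hlam.le) (hθ_nonneg t)
  have hφ0 : (lam : EReal) * θ 0 = 0 := by rw [hθ0, mul_zero]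
  refine ⟨?_, fun hu => ?_⟩
  · rintro rfl
    exact setOf_isMin_radialObjective_zero (φ := fun t => (lam : EReal) * θ t) hγ.ne' hφ hφ0
  · refine setOf_isMin_radialObjective_of_ne_zero (φ := fun t => (lam : EReal) * θ t) hγ hu hφ
      (fun t ht => ?_) (hφ0 ▸ EReal.zero_ne_top)
    rw [hθneg t ht, EReal.coe_mul_top_of_pos hlam]

/-- prox of `λ θ(‖·‖)` on ℝⁿ reduces to the scalar prox of θ
along the direction `u/‖u‖`. -/
theorem stmt_0 {n : ℕ} (θ : ℝ → EReal)
    (hlsc : LowerSemicontinuous θ)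
    (hθ0 : θ 0 = 0) (hθpos : ∀ t : ℝ, 0 < t → 0 < θ t)
    (hθneg : ∀ t : ℝ, t < 0 → θ t = ⊤)
    (γ lam : ℝ) (hγ : 0 < γ) (hlam : 0 < lam)
    (u : EuclideanSpace ℝ (Fin n))
    (S : Set (EuclideanSpace ℝ (Fin n)))
    (hS : S = {x | ∀ y : EuclideanSpace ℝ (Fin n),
      (((1/2) * ‖γ • x - u‖^2 : ℝ) : EReal) + (lam : EReal) * θ ‖x‖
        ≤ (((1/2) * ‖γ • y - u‖^2 : ℝ) : EReal) + (lam : EReal) * θ ‖y‖}) :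
    (u = 0 → S = {0}) ∧
    (u ≠ 0 → S = (fun s : ℝ => (s / ‖u‖) • u) ''
      {t : ℝ | ∀ s : ℝ,
        (((1/2) * (γ * t - ‖u‖)^2 : ℝ) : EReal) + (lam : EReal) * θ t
          ≤ (((1/2) * (γ * s - ‖u‖)^2 : ℝ) : EReal) + (lam : EReal) * θ s}) :=
  stmt_0_general θ hθ0 hθpos hθneg γ lam hγ hlam u S hS
end

section
/- Let p ∈ (0,1], and let σ₁ ≥ σ₂ ≥ … ≥ σ_r ≥ 0 be nonnegative reals. For any matrix R ∈ ℝ^{d×r} with orthonormal columns (r ≤ d), one has Σ_{j=1}^r σ_j^p ≤ Σ_{i=1}^d ( Σ_{j=1}^r R_{ij}² σ_j )^p. -/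
open Matrix

/-- Jensen-type lemma: for concave `x ↦ x^p` with `p ∈ (0,1]`, subprobability weights,
`∑ w_j x_j^p ≤ (∑ w_j x_j)^p`. -/
lemma key_jensen {n : ℕ} (p : ℝ) (hp0 : 0 < p) (hp1 : p ≤ 1)
    (w x : Fin n → ℝ) (hw : ∀ j, 0 ≤ w j) (hw1 : ∑ j, w j ≤ 1)
    (hx : ∀ j, 0 ≤ x j) :
    ∑ j, w j * (x j) ^ p ≤ (∑ j, w j * x j) ^ p := by
  have hconc : ConcaveOn ℝ (Set.Ici 0) fun t : ℝ ↦ t ^ p :=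
    Real.concaveOn_rpow hp0.le hp1
  have h := hconc.map_add_sum_le (v := 1 - ∑ j, w j) (q := 0) (t := Finset.univ)
    (w := w) (p := x) (fun j _ => hw j) (by ring) (fun j _ => hx j)
    (by linarith) (le_refl (0:ℝ))
  simp only [smul_eq_mul, Real.zero_rpow hp0.ne', mul_zero, zero_add] at h
  exact h

theorem row_sum_le_one {d r : ℕ} (R : Matrix (Fin d) (Fin r) ℝ) (hR : Rᵀ * R = 1)
    (i : Fin d) : ∑ j, (R i j) ^ 2 ≤ 1 := by
  set P := R * Rᵀ with hP
  have hPidem : P * P = P := by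
    rw [hP, Matrix.mul_assoc, ← Matrix.mul_assoc Rᵀ, hR, Matrix.one_mul]
  have hPii : P i i = ∑ j, (R i j) ^ 2 := by
    simp [hP, Matrix.mul_apply, Matrix.transpose_apply, sq]
  have hPnn : 0 ≤ P i i := by
    rw [hPii]; exact Finset.sum_nonneg fun j _ => sq_nonneg _
  have hsq : (P i i) ^ 2 ≤ P i i := by
    have : P i i = ∑ k, (P i k) ^ 2 := by
      conv_lhs => rw [← hPidem]
      have hsymm : ∀ k, P k i = P i k := by
        intro k
        simp [hP, Matrix.mul_apply, Matrix.transpose_apply, mul_comm]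
      simp [Matrix.mul_apply, hsymm, sq]
    conv_rhs => rw [this]
    exact Finset.single_le_sum (f := fun k => (P i k) ^ 2)
      (fun k _ => sq_nonneg _) (Finset.mem_univ i)
  rw [← hPii]
  nlinarith [hPnn, hsq]

/-- for `p ∈ (0,1]`, nonincreasing nonnegative `σ` and a matrix `R`
with orthonormal columns, `∑ j σ_j^p ≤ ∑ i (∑ j R_{ij}² σ_j)^p`. -/
theorem stmt_1 {d r : ℕ} (p : ℝ) (hp0 : 0 < p) (hp1 : p ≤ 1)
    (σ : Fin r → ℝ) (hσnn : ∀ j, 0 ≤ σ j) (hσmono : Antitone σ)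
    (R : Matrix (Fin d) (Fin r) ℝ) (hR : Rᵀ * R = 1) :
    ∑ j, (σ j) ^ p ≤ ∑ i, (∑ j, (R i j)^2 * σ j) ^ p := by
  have hcol : ∀ j, ∑ i, (R i j) ^ 2 = 1 := by
    intro j
    have := congrFun (congrFun hR j) j
    simpa [Matrix.mul_apply, Matrix.transpose_apply, Matrix.one_apply, sq] using this
  calc ∑ j, (σ j) ^ p = ∑ j, ∑ i, (R i j) ^ 2 * (σ j) ^ p := by
        refine Finset.sum_congr rfl fun j _ => ?_
        rw [← Finset.sum_mul, hcol j, one_mul]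
    _ = ∑ i, ∑ j, (R i j) ^ 2 * (σ j) ^ p := Finset.sum_comm
    _ ≤ ∑ i, (∑ j, (R i j) ^ 2 * σ j) ^ p := by
        refine Finset.sum_le_sum fun i _ => ?_
        exact key_jensen p hp0 hp1 (fun j => (R i j) ^ 2) σ
          (fun j => sq_nonneg _) (row_sum_le_one R hR i) hσnn
end

section
/- Let p ∈ (0,1]. For any matrix X ∈ ℝ^{n×m}, the Schatten p-quasinorm satisfies ‖X‖_{S_p}^p ≤ ‖X‖_{2,p}^p, i.e. Σ_i σ_i(X)^p ≤ Σ_{j=1}^m ‖X_j‖^p, where X_j denotes the j-th column of X and σ_i(X) the singular values of X. -/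
/-!
Write `Xᴴ X = U diag(λ) Uᴴ` with `U` unitary. Then `‖X_j‖² = (Xᴴ X)_jj = ∑ₖ |U_jk|² λₖ`, and the
matrix `(|U_jk|²)` is doubly stochastic. Since `σₖ^p = λₖ^(p/2)` and `t ↦ t^(p/2)` is concave,
Jensen's inequality applied row by row and summed over `j` (using that columns sum to one) gives
`∑ₖ λₖ^(p/2) ≤ ∑ⱼ (Xᴴ X)_jj^(p/2)`.
-/

open Matrix

noncomputable def singVals {n m : ℕ} (X : Matrix (Fin n) (Fin m) ℝ) : Fin m → ℝ :=
  fun i => Real.sqrt ((Matrix.isHermitian_conjTranspose_mul_self X).eigenvalues i)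

open Finset

theorem ConcaveOn.sum_le_sum_map_mulVec {𝕜 ι : Type*} [Field 𝕜] [LinearOrder 𝕜]
    [IsStrictOrderedRing 𝕜] [Fintype ι] [DecidableEq ι] {s : Set 𝕜} {f : 𝕜 → 𝕜}
    (hf : ConcaveOn 𝕜 s f) {M : Matrix ι ι 𝕜} (hM : M ∈ doublyStochastic 𝕜 ι) {x : ι → 𝕜}
    (hx : ∀ i, x i ∈ s) :
    ∑ i, f (x i) ≤ ∑ i, f ((M *ᵥ x) i) :=
  calc ∑ k, f (x k) = ∑ j, ∑ k, M j k • f (x k) := by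
        rw [sum_comm]
        simp only [smul_eq_mul, ← sum_mul, sum_col_of_mem_doublyStochastic hM, one_mul]
    _ ≤ ∑ j, f (∑ k, M j k • x k) := sum_le_sum fun j _ =>
        hf.le_map_sum (fun k _ => nonneg_of_mem_doublyStochastic hM)
          (sum_row_of_mem_doublyStochastic hM j) fun k _ => hx k
    _ = ∑ j, f ((M *ᵥ x) j) := rfl

namespace Matrix

variable {𝕜 ι : Type*} [RCLike 𝕜] [Fintype ι] [DecidableEq ι]

theorem of_norm_sq_mem_doublyStochastic {U : Matrix ι ι 𝕜} (hU : U ∈ unitaryGroup ι 𝕜) :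
    (of fun i j => ‖U i j‖ ^ 2) ∈ doublyStochastic ℝ ι := by
  refine mem_doublyStochastic_iff_sum.2 ⟨fun _ _ => sq_nonneg _, fun i => ?_, fun j => ?_⟩
  · have h := congrFun₂ (mem_unitaryGroup_iff.1 hU) i i
    simp only [mul_apply, star_apply, RCLike.star_def, RCLike.mul_conj, one_apply_eq] at h
    exact_mod_cast h
  · have h := congrFun₂ (mem_unitaryGroup_iff'.1 hU) j j
    simp only [mul_apply, star_apply, RCLike.star_def, RCLike.conj_mul, one_apply_eq] at h
    exact_mod_cast h

theorem IsHermitian.re_diag_eq_mulVec_eigenvalues {A : Matrix ι ι 𝕜} (hA : A.IsHermitian)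
    (j : ι) :
    RCLike.re (A j j) =
      ((of fun i k => ‖hA.eigenvectorUnitary i k‖ ^ 2) *ᵥ hA.eigenvalues) j := by
  conv_lhs => rw [hA.spectral_theorem, Unitary.conjStarAlgAut_apply]
  rw [mul_apply, ← RCLike.ofReal_re (K := 𝕜) (((of _) *ᵥ _) j)]
  congr 1
  simp only [mulVec, dotProduct, of_apply, mul_diagonal, star_apply, RCLike.star_def,
    Function.comp_apply, RCLike.ofReal_sum, RCLike.ofReal_mul, RCLike.ofReal_pow,
    ← RCLike.mul_conj]
  exact sum_congr rfl fun k _ => by ring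

theorem IsHermitian.sum_map_eigenvalues_le {A : Matrix ι ι 𝕜} (hA : A.IsHermitian) {s : Set ℝ}
    {f : ℝ → ℝ} (hf : ConcaveOn ℝ s f) (hs : ∀ i, hA.eigenvalues i ∈ s) :
    ∑ i, f (hA.eigenvalues i) ≤ ∑ j, f (RCLike.re (A j j)) := by
  simpa only [hA.re_diag_eq_mulVec_eigenvalues] using
    hf.sum_le_sum_map_mulVec (of_norm_sq_mem_doublyStochastic hA.eigenvectorUnitary.2) hs

end Matrix

/-- the Schatten `p`-quasinorm is dominated by the column
`ℓ_{2,p}`-quasinorm, `∑ i σ_i(X)^p ≤ ∑ j ‖X_j‖^p`, for `p ∈ (0,1]`. -/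
theorem stmt_2 {n m : ℕ} (p : ℝ) (hp0 : 0 < p) (hp1 : p ≤ 1)
    (X : Matrix (Fin n) (Fin m) ℝ) :
    ∑ i, (singVals X i) ^ p ≤ ∑ j, (Real.sqrt (∑ i, (X i j)^2)) ^ p := by
  have hX := posSemidef_conjTranspose_mul_self X
  have hdiag (j : Fin m) : ∑ i, X i j ^ 2 = RCLike.re ((Xᴴ * X) j j) := by
    simp [mul_apply, sq]
  have hdiag_nonneg (j : Fin m) : 0 ≤ RCLike.re ((Xᴴ * X) j j) :=
    hdiag j ▸ sum_nonneg fun i _ => sq_nonneg _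
  simp only [singVals, hdiag, ← Real.rpow_div_two_eq_sqrt p (hX.eigenvalues_nonneg _),
    ← Real.rpow_div_two_eq_sqrt p (hdiag_nonneg _)]
  exact hX.isHermitian.sum_map_eigenvalues_le
    (Real.concaveOn_rpow (by positivity) (by linarith)) hX.eigenvalues_nonneg
end

section
/- Let f : ℝ^{n×m} → ℝ be differentiable and μ > 0. Define F_μ(U,V) := f(UVᵀ) + (μ/2)(‖U‖_F² + ‖V‖_F²). If (Ū,V̄) is a critical point of F_μ, i.e. ∇f(ŪV̄ᵀ)V̄ + μŪ = 0 and (∇f(ŪV̄ᵀ))ᵀŪ + μV̄ = 0, then ŪᵀŪ = V̄ᵀV̄. -/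
open Matrix

/-- a critical point `(Ū, V̄)` of
`F_μ(U,V) = f(UVᵀ) + (μ/2)(‖U‖_F² + ‖V‖_F²)`, i.e. a pair satisfying
`G V̄ + μŪ = 0` and `Gᵀ Ū + μV̄ = 0` with `G = ∇f(ŪV̄ᵀ)`, is balanced:
`Ūᵀ Ū = V̄ᵀ V̄`. -/
theorem stmt_10 {n m r : ℕ} (μ : ℝ) (hμ : 0 < μ)
    (G : Matrix (Fin n) (Fin m) ℝ)
    (Ubar : Matrix (Fin n) (Fin r) ℝ) (Vbar : Matrix (Fin m) (Fin r) ℝ)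
    (h1 : G * Vbar + μ • Ubar = 0)
    (h2 : Gᵀ * Ubar + μ • Vbar = 0) :
    Ubarᵀ * Ubar = Vbarᵀ * Vbar := by
  have e1 : G * Vbar = -(μ • Ubar) := by linear_combination (norm := abel) h1
  have e2 : Gᵀ * Ubar = -(μ • Vbar) := by linear_combination (norm := abel) h2
  have key : μ • (Ubarᵀ * Ubar) = μ • (Vbarᵀ * Vbar) := by
    have t1 : Ubarᵀ * (G * Vbar) = -(μ • (Ubarᵀ * Ubar)) := by
      rw [e1]; simp [Matrix.mul_neg, Matrix.mul_smul]
    have t2 : Ubarᵀ * (G * Vbar) = (Gᵀ * Ubar)ᵀ * Vbar := by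
      rw [Matrix.transpose_mul, Matrix.transpose_transpose, Matrix.mul_assoc]
    have t3 : (Gᵀ * Ubar)ᵀ * Vbar = -(μ • (Vbarᵀ * Vbar)) := by
      rw [e2, Matrix.transpose_neg, Matrix.transpose_smul, Matrix.neg_mul,
        Matrix.smul_mul]
    have := t1.symm.trans (t2.trans t3)
    exact neg_injective this
  have := congrArg (fun M => μ⁻¹ • M) key
  simpa [smul_smul, inv_mul_cancel₀ hμ.ne'] using this
end
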